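/- There is no finitely additive measure μ defined on all subsets of ℝ with 0 < μ(ℝ) < ∞ that is invariant under all piecewise rigid bijections of the form x ↦ σ(⌊x⌋) + (x - ⌊x⌋) for permutations σ of ℤ. -/
import Mathlib


/-- The piecewise rigid extension of a permutation of ℤ to ℝ. -/
noncomputable def pwr (σ : Equiv.Perm ℤ) : ℝ → ℝ :=
  fun x => (σ ⌊x⌋ : ℝ) + (x - ⌊x⌋)

/-- The union of unit intervals `[n, n+1)` for `n ∈ s`. -/
def Fset (s : Set ℤ) : Set ℝ := {x | ⌊x⌋ ∈ s}

lemma floor_pwr (σ : Equiv.Perm ℤ) (x : ℝ) : ⌊pwr σ x⌋ = σ ⌊x⌋ := by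
  have h : pwr σ x = (σ ⌊x⌋ : ℝ) + Int.fract x := rfl
  rw [h, Int.floor_intCast_add, Int.floor_fract, add_zero]

lemma pwr_image (σ : Equiv.Perm ℤ) (s : Set ℤ) :
    pwr σ '' Fset s = Fset (σ '' s) := by
  ext y
  constructor
  · rintro ⟨x, hx, rfl⟩
    exact ⟨⌊x⌋, hx, (floor_pwr σ x).symm⟩
  · rintro ⟨m, hm, hmy⟩
    refine ⟨(m : ℝ) + Int.fract y, ?_, ?_⟩
    · show ⌊(m : ℝ) + Int.fract y⌋ ∈ s
      rw [Int.floor_intCast_add, Int.floor_fract, add_zero]; exact hm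
    · have hf : ⌊(m : ℝ) + Int.fract y⌋ = m := by
        rw [Int.floor_intCast_add, Int.floor_fract, add_zero]
      show (σ ⌊(m : ℝ) + Int.fract y⌋ : ℝ) + (((m : ℝ) + Int.fract y) - ⌊(m : ℝ) + Int.fract y⌋) = y
      rw [hf, hmy]
      have := Int.floor_add_fract y
      linarith

lemma exists_perm_image (s t : Set ℤ) (hs : s.Infinite) (hs' : sᶜ.Infinite)
    (ht : t.Infinite) (ht' : tᶜ.Infinite) : ∃ σ : Equiv.Perm ℤ, σ '' s = t := by
  classical
  have key : ∀ u : Set ℤ, u.Infinite → Nonempty (Denumerable u) := fun u hu => by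
    have := hu.to_subtype
    exact nonempty_denumerable _
  obtain ⟨d1⟩ := key s hs
  obtain ⟨d2⟩ := key t ht
  obtain ⟨d3⟩ := key sᶜ hs'
  obtain ⟨d4⟩ := key tᶜ ht'
  let e : s ≃ t := (@Denumerable.eqv _ d1).trans (@Denumerable.eqv _ d2).symm
  let e' : (sᶜ : Set ℤ) ≃ (tᶜ : Set ℤ) :=
    (@Denumerable.eqv _ d3).trans (@Denumerable.eqv _ d4).symm
  refine ⟨(Equiv.Set.sumCompl s).symm.trans ((e.sumCongr e').trans (Equiv.Set.sumCompl t)), ?_⟩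
  apply Set.eq_of_subset_of_subset
  · rintro y ⟨x, hx, rfl⟩
    have h1 : (Equiv.Set.sumCompl s).symm x = Sum.inl ⟨x, hx⟩ :=
      Equiv.Set.sumCompl_symm_apply (x := ⟨x, hx⟩)
    simp [h1]
  · intro y hy
    refine ⟨(Equiv.Set.sumCompl s) (Sum.inl (e.symm ⟨y, hy⟩)), (e.symm ⟨y, hy⟩).2, ?_⟩
    simp

lemma mod4_infinite (i : ℤ) : {n : ℤ | n % 4 = i % 4}.Infinite := by
  have h1 : Function.Injective (fun k : ℕ => 4 * (k : ℤ) + i) := by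
    intro a b hab
    simp only at hab
    omega
  have h2 : ∀ k : ℕ, (fun k : ℕ => 4 * (k : ℤ) + i) k ∈ {n : ℤ | n % 4 = i % 4} := by
    intro k; simp only [Set.mem_setOf_eq]; omega
  exact Set.infinite_of_injective_forall_mem h1 h2

lemma mod4_infinite' (i : ℤ) (h1 : 0 ≤ i) (h2 : i < 4) : {n : ℤ | n % 4 = i}.Infinite := by
  have := mod4_infinite i
  rwa [Int.emod_eq_of_lt h1 h2] at this

theorem no_invariant_finitely_additive_measure :
    ¬ ∃ μ : Set ℝ → ENNReal,
      (∀ S T : Set ℝ, Disjoint S T → μ (S ∪ T) = μ S + μ T) ∧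
      0 < μ Set.univ ∧ μ Set.univ < ⊤ ∧
      (∀ (σ : Equiv.Perm ℤ) (S : Set ℝ), μ (pwr σ '' S) = μ S) := by
  rintro ⟨μ, hadd, hpos, hfin, hinv⟩
  set s0 : Set ℤ := {n | n % 4 = 0} with hs0
  set s1 : Set ℤ := {n | n % 4 = 1} with hs1
  set s2 : Set ℤ := {n | n % 4 = 2} with hs2
  set s3 : Set ℤ := {n | n % 4 = 3} with hs3
  have hdisj : ∀ u v : Set ℤ, (∀ n, n ∈ u → n ∉ v) → Disjoint (Fset u) (Fset v) := by
    intro u v h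
    rw [Set.disjoint_left]
    intro x hx hx'
    exact h _ hx hx'
  have hFunion : ∀ u v : Set ℤ, Fset u ∪ Fset v = Fset (u ∪ v) := by
    intro u v; ext x; simp [Fset]
  have hμadd : ∀ u v : Set ℤ, (∀ n, n ∈ u → n ∉ v) →
      μ (Fset (u ∪ v)) = μ (Fset u) + μ (Fset v) := by
    intro u v h
    rw [← hFunion]; exact hadd _ _ (hdisj u v h)
  have key : ∀ s t : Set ℤ, s.Infinite → sᶜ.Infinite → t.Infinite → tᶜ.Infinite →
      μ (Fset s) = μ (Fset t) := by
    intro s t a b c d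
    obtain ⟨σ, hσ⟩ := exists_perm_image s t a b c d
    rw [← hinv σ (Fset s), pwr_image, hσ]
  have inf0 : s0.Infinite := mod4_infinite' 0 (by norm_num) (by norm_num)
  have inf1 : s1.Infinite := mod4_infinite' 1 (by norm_num) (by norm_num)
  have inf2 : s2.Infinite := mod4_infinite' 2 (by norm_num) (by norm_num)
  have inf3 : s3.Infinite := mod4_infinite' 3 (by norm_num) (by norm_num)
  -- complements
  have hc1 : (s1 ∪ (s2 ∪ s3))ᶜ = s0 := by
    ext n; simp only [hs0, hs1, hs2, hs3, Set.mem_compl_iff, Set.mem_union, Set.mem_setOf_eq]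
    omega
  have hc2 : (s3 ∪ (s0 ∪ s1))ᶜ = s2 := by
    ext n; simp only [hs0, hs1, hs2, hs3, Set.mem_compl_iff, Set.mem_union, Set.mem_setOf_eq]
    omega
  -- no piece has infinite measure
  have hle : ∀ s : Set ℤ, μ (Fset s) ≠ ⊤ := by
    intro s h
    have huniv : Fset (s ∪ sᶜ) = Set.univ := by
      ext x; simp [Fset]
    have htot : μ Set.univ = μ (Fset s) + μ (Fset sᶜ) := by
      rw [← huniv]
      exact hμadd s sᶜ (fun n hn hn' => hn' hn)
    rw [htot, h] at hfin
    simp at hfin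
  -- s1 ≅ s1 ∪ s2 ∪ s3
  have e1 : μ (Fset s1) = μ (Fset (s1 ∪ (s2 ∪ s3))) := by
    apply key
    · exact inf1
    · apply inf0.mono
      intro n hn
      simp only [hs0, Set.mem_setOf_eq] at hn
      simp only [hs1, Set.mem_compl_iff, Set.mem_setOf_eq]
      omega
    · exact inf1.mono Set.subset_union_left
    · rw [hc1]; exact inf0
  -- s3 ≅ s3 ∪ s0 ∪ s1
  have e2 : μ (Fset s3) = μ (Fset (s3 ∪ (s0 ∪ s1))) := by
    apply key
    · exact inf3
    · apply inf0.mono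
      intro n hn
      simp only [hs0, Set.mem_setOf_eq] at hn
      simp only [hs3, Set.mem_compl_iff, Set.mem_setOf_eq]
      omega
    · exact inf3.mono Set.subset_union_left
    · rw [hc2]; exact inf2
  have d1 : μ (Fset (s1 ∪ (s2 ∪ s3))) = μ (Fset s1) + (μ (Fset s2) + μ (Fset s3)) := by
    rw [hμadd, hμadd]
    · intro n; simp only [hs2, hs3, Set.mem_setOf_eq]; omega
    · intro n; simp only [hs1, hs2, hs3, Set.mem_union, Set.mem_setOf_eq]; omega
  have d2 : μ (Fset (s3 ∪ (s0 ∪ s1))) = μ (Fset s3) + (μ (Fset s0) + μ (Fset s1)) := by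
    rw [hμadd, hμadd]
    · intro n; simp only [hs0, hs1, Set.mem_setOf_eq]; omega
    · intro n; simp only [hs0, hs1, hs3, Set.mem_union, Set.mem_setOf_eq]; omega
  -- cancellation gives vanishing
  have z1 : μ (Fset s2) + μ (Fset s3) = 0 := by
    have h := e1.trans d1
    nth_rewrite 1 [← add_zero (μ (Fset s1))] at h
    exact ((ENNReal.add_right_inj (hle s1)).mp h).symm
  have z2 : μ (Fset s0) + μ (Fset s1) = 0 := by
    have h := e2.trans d2
    nth_rewrite 1 [← add_zero (μ (Fset s3))] at h
    exact ((ENNReal.add_right_inj (hle s3)).mp h).symm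
  -- total measure is zero : contradiction
  have huniv : Fset (s0 ∪ (s1 ∪ (s2 ∪ s3))) = Set.univ := by
    ext x
    simp only [Fset, hs0, hs1, hs2, hs3, Set.mem_union, Set.mem_setOf_eq, Set.mem_univ, iff_true]
    omega
  have htot : μ Set.univ = μ (Fset s0) + (μ (Fset s1) + (μ (Fset s2) + μ (Fset s3))) := by
    rw [← huniv, hμadd s0 (s1 ∪ (s2 ∪ s3))
      (by intro n; simp only [hs0, hs1, hs2, hs3, Set.mem_union, Set.mem_setOf_eq]; omega), d1]
  rw [htot, z1] at hpos
  have h0 : μ (Fset s0) = 0 := by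
    have := add_eq_zero.mp z2
    exact this.1
  have h1 : μ (Fset s1) = 0 := (add_eq_zero.mp z2).2
  rw [h0, h1] at hpos
  simp at hpos
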